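/- The genial entropy of the half-Gaussian corner density f(x) = (2/√π)·e^{-x²} on [0,∞) equals (-1 + γ + ln π)/2, where γ is Euler's constant. -/

import Mathlib

/-!
Writing `c = 2 / √π`, we have `log (x f x) = log c + log x - x²`, so the entropy integral splits
into the Gaussian moments `∫ e^{-x²}`, `∫ x² e^{-x²}` and `∫ log x · e^{-x²}` over `(0, ∞)`.
The substitution `t = x²` turns them into `Γ(1/2) / 2`, `Γ(3/2) / 2` and `Γ'(1/2) / 4`, the last
by differentiating Euler's integral under the integral sign; finally `Γ'(1/2) = -√π (γ + 2 log 2)`.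
-/

open MeasureTheory Real Set Topology

namespace Real

lemma abs_log_le_rpow_add_rpow_neg_div {x ε : ℝ} (hx : 0 < x) (hε : 0 < ε) :
    |log x| ≤ (x ^ ε + x ^ (-ε)) / ε := by
  have hpos := log_le_rpow_div hx.le hε
  have hneg : -log x ≤ x ^ (-ε) / ε := by
    rw [← log_inv, rpow_neg hx.le, ← inv_rpow hx.le]
    exact log_le_rpow_div (inv_nonneg.2 hx.le) hε
  have : 0 ≤ x ^ ε / ε := by positivity
  have : 0 ≤ x ^ (-ε) / ε := by positivity
  rw [add_div]
  exact abs_le.2 ⟨by linarith, by linarith⟩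

lemma integrableOn_rpow_mul_log_mul_exp_neg {s : ℝ} (hs : 0 < s) :
    IntegrableOn (fun t => t ^ (s - 1) * (log t * exp (-t))) (Ioi 0) := by
  have hε : 0 < s / 2 := by positivity
  have hdom := ((GammaIntegral_convergent (s := s + s / 2) (by positivity)).add
    (GammaIntegral_convergent (s := s - s / 2) (by linarith))).const_mul (s / 2)⁻¹
  refine hdom.mono' ?_ ?_
  · exact (ContinuousOn.mul (continuousOn_id.rpow_const fun t ht => Or.inl (ne_of_gt ht))
      ((continuousOn_log.mono fun t ht => ne_of_gt ht).mul
        (continuous_exp.comp continuous_neg).continuousOn)).aestronglyMeasurable measurableSet_Ioi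
  · filter_upwards [ae_restrict_mem measurableSet_Ioi] with t (ht : 0 < t)
    have hlog := abs_log_le_rpow_add_rpow_neg_div ht hε
    calc ‖t ^ (s - 1) * (log t * exp (-t))‖ = t ^ (s - 1) * exp (-t) * |log t| := by
          rw [norm_mul, norm_mul, norm_of_nonneg (by positivity), norm_of_nonneg (exp_pos _).le,
            Real.norm_eq_abs]; ring
      _ ≤ t ^ (s - 1) * exp (-t) * ((t ^ (s / 2) + t ^ (-(s / 2))) / (s / 2)) := by gcongr
      _ = (s / 2)⁻¹ * (exp (-t) * t ^ (s + s / 2 - 1) + exp (-t) * t ^ (s - s / 2 - 1)) := by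
          rw [show s + s / 2 - 1 = s - 1 + s / 2 by ring,
            show s - s / 2 - 1 = s - 1 + -(s / 2) by ring, rpow_add ht, rpow_add ht]
          ring

lemma hasDerivAt_Gamma_integral {s : ℝ} (hs : 0 < s) :
    HasDerivAt Gamma (∫ t in Ioi 0, t ^ (s - 1) * (log t * exp (-t))) s := by
  have hGamma : Complex.Gamma =ᶠ[𝓝 (s : ℂ)] Complex.GammaIntegral := by
    filter_upwards [(isOpen_lt continuous_const Complex.continuous_re).mem_nhds
      (by simpa using hs : (0 : ℝ) < (s : ℂ).re)] with z hz
    exact Complex.Gamma_eq_integral hz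
  have hC : HasDerivAt Gamma _ s := ((Complex.hasDerivAt_GammaIntegral
    (by simpa using hs)).congr_of_eventuallyEq hGamma).real_of_complex
  convert hC using 1
  rw [← Complex.ofReal_re (∫ t in Ioi 0, _), ← integral_complex_ofReal]
  congr 1
  refine setIntegral_congr_fun measurableSet_Ioi fun t (ht : 0 < t) => ?_
  rw [← Complex.ofReal_one, ← Complex.ofReal_sub, ← Complex.ofReal_cpow ht.le]
  push_cast; ring

end Real

section LogMoments

variable {p q : ℝ}

lemma rpow_mul_log_mul_exp_neg_rpow_comp_rpow_inv (hp : 0 < p) {x : ℝ} (hx : 0 < x) :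
    (|p⁻¹| * x ^ (p⁻¹ - 1)) • ((x ^ p⁻¹) ^ q * log (x ^ p⁻¹) * exp (-(x ^ p⁻¹) ^ p)) =
      (p ^ 2)⁻¹ * (x ^ ((q + 1) / p - 1) * (log x * exp (-x))) := by
  have hx' : x ^ ((q + 1) / p - 1) = x ^ (p⁻¹ - 1) * x ^ (p⁻¹ * q) := by
    rw [← rpow_add hx]; ring_nf
  rw [abs_of_pos (inv_pos.2 hp), smul_eq_mul, rpow_inv_rpow hx.le hp.ne', log_rpow hx,
    ← rpow_mul hx.le, hx']
  ring

lemma integrableOn_rpow_mul_log_mul_exp_neg_rpow (hp : 0 < p) (hq : -1 < q) :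
    IntegrableOn (fun x => x ^ q * log x * exp (-x ^ p)) (Ioi 0) := by
  rw [← integrableOn_Ioi_comp_rpow_iff _ (inv_ne_zero hp.ne')]
  refine IntegrableOn.congr_fun ((integrableOn_rpow_mul_log_mul_exp_neg (s := (q + 1) / p)
    (div_pos (by linarith) hp)).const_mul (p ^ 2)⁻¹) (fun x hx => ?_) measurableSet_Ioi
  exact (rpow_mul_log_mul_exp_neg_rpow_comp_rpow_inv hp hx).symm

lemma integral_rpow_mul_log_mul_exp_neg_rpow (hp : 0 < p) (hq : -1 < q) :
    ∫ x in Ioi 0, x ^ q * log x * exp (-x ^ p) = (p ^ 2)⁻¹ * deriv Gamma ((q + 1) / p) := by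
  rw [← integral_comp_rpow_Ioi _ (inv_ne_zero hp.ne'),
    setIntegral_congr_fun measurableSet_Ioi fun x hx =>
      rpow_mul_log_mul_exp_neg_rpow_comp_rpow_inv hp hx, integral_const_mul,
    (hasDerivAt_Gamma_integral (div_pos (by linarith) hp)).deriv]

end LogMoments

section GaussianMoments

lemma integral_exp_neg_sq_Ioi : ∫ x in Ioi 0, exp (-x ^ 2) = √π / 2 := by
  simpa using integral_gaussian_Ioi 1

lemma integrableOn_sq_mul_exp_neg_sq : IntegrableOn (fun x => x ^ 2 * exp (-x ^ 2)) (Ioi 0) := by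
  simpa using integrableOn_rpow_mul_exp_neg_rpow (s := 2) (by norm_num) two_pos

lemma integral_sq_mul_exp_neg_sq_Ioi : ∫ x in Ioi 0, x ^ 2 * exp (-x ^ 2) = √π / 4 := by
  have h := integral_rpow_mul_exp_neg_rpow (q := 2) two_pos (by norm_num)
  rw [show ((2 : ℝ) + 1) / 2 = 1 / 2 + 1 by norm_num, Gamma_add_one one_half_pos.ne',
    Gamma_one_half_eq] at h
  simp only [rpow_two] at h
  rw [h]; ring

lemma integrableOn_log_mul_exp_neg_sq : IntegrableOn (fun x => log x * exp (-x ^ 2)) (Ioi 0) := by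
  simpa using integrableOn_rpow_mul_log_mul_exp_neg_rpow two_pos neg_one_lt_zero

lemma integral_log_mul_exp_neg_sq_Ioi :
    ∫ x in Ioi 0, log x * exp (-x ^ 2) = -√π * (eulerMascheroniConstant + 2 * log 2) / 4 := by
  have h := integral_rpow_mul_log_mul_exp_neg_rpow two_pos neg_one_lt_zero
  simp only [rpow_zero, one_mul, rpow_two, zero_add] at h
  rw [h, hasDerivAt_Gamma_one_half.deriv]; ring

end GaussianMoments

/-- The genial entropy of the half-Gaussian corner density `f(x) = (2/√π)·e^{-x²}` on `[0,∞)`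
equals `(-1 + γ + ln π)/2`, where `γ` is Euler's constant. -/
theorem genial_entropy_half_gaussian :
    -1 - ∫ x in Set.Ici (0:ℝ),
        (2 / Real.sqrt π * Real.exp (-x ^ 2)) *
          Real.log (x * (2 / Real.sqrt π * Real.exp (-x ^ 2))) =
      (-1 + Real.eulerMascheroniConstant + Real.log π) / 2 := by
  set c := 2 / √π with hc_def
  have hc : 0 < c := by positivity
  have hintegrand : ∀ x ∈ Ioi (0 : ℝ), c * exp (-x ^ 2) * log (x * (c * exp (-x ^ 2))) =
      c * log c * exp (-x ^ 2) + c * (log x * exp (-x ^ 2)) - c * (x ^ 2 * exp (-x ^ 2)) := by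
    intro x hx
    rw [log_mul (ne_of_gt hx) (by positivity), log_mul hc.ne' (exp_pos _).ne', log_exp]
    ring
  have hgauss : IntegrableOn (fun x : ℝ => exp (-x ^ 2)) (Ioi 0) := by
    simpa using (integrable_exp_neg_mul_sq one_pos).integrableOn
  rw [integral_Ici_eq_integral_Ioi, setIntegral_congr_fun measurableSet_Ioi hintegrand,
    integral_sub ((hgauss.const_mul _).fun_add (integrableOn_log_mul_exp_neg_sq.const_mul _))
      (integrableOn_sq_mul_exp_neg_sq.const_mul _),
    integral_add (hgauss.const_mul _) (integrableOn_log_mul_exp_neg_sq.const_mul _),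
    integral_const_mul, integral_const_mul, integral_const_mul, integral_exp_neg_sq_Ioi,
    integral_log_mul_exp_neg_sq_Ioi, integral_sq_mul_exp_neg_sq_Ioi]
  have hlog_c : log c = log 2 - log π / 2 := by
    rw [hc_def, log_div two_ne_zero (sqrt_pos.2 pi_pos).ne', log_sqrt pi_pos.le]
  rw [hlog_c, hc_def]
  field_simp
  ring
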